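/- The 3-form φ₀ is a calibration on Euclidean ℝ⁷: for every orthonormal triple of vectors v₁, v₂, v₃ ∈ ℝ⁷ one has φ₀(v₁, v₂, v₃) ≤ 1 (equivalently |φ₀(v₁,v₂,v₃)| ≤ 1), with equality φ₀ = 1 attained for some orthonormal triple, e.g. the first three standard basis vectors. -/

import Mathlib

open scoped RealInnerProductSpace

noncomputable section

/-- ℝ⁷ with its standard Euclidean inner product. -/
abbrev E7 := EuclideanSpace ℝ (Fin 7)

/-- The coordinate 3-form dx_i ∧ dx_j ∧ dx_k on ℝ⁷ (indices 0,…,6 for x₁,…,x₇). -/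
def tri7 (i j k : Fin 7) (u v w : E7) : ℝ :=
  Matrix.det !![u i, u j, u k; v i, v j, v k; w i, w j, w k]

/-- The G₂ 3-form φ₀ = dx₁₂₃ + dx₁₄₅ + dx₁₆₇ + dx₂₄₆ − dx₂₅₇ − dx₃₄₇ − dx₃₅₆. -/
def phi0 (u v w : E7) : ℝ :=
  tri7 0 1 2 u v w + tri7 0 3 4 u v w + tri7 0 5 6 u v w + tri7 1 3 5 u v w
    - tri7 1 4 6 u v w - tri7 2 3 6 u v w - tri7 2 4 5 u v w

set_option maxHeartbeats 2000000 in
/-- Cauchy–Schwarz for 7-tuples of reals, via Lagrange's identity. -/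
lemma cs7 (a0 a1 a2 a3 a4 a5 a6 b0 b1 b2 b3 b4 b5 b6 : ℝ) :
    (a0*b0 + a1*b1 + a2*b2 + a3*b3 + a4*b4 + a5*b5 + a6*b6)^2 ≤
      (a0^2 + a1^2 + a2^2 + a3^2 + a4^2 + a5^2 + a6^2) *
        (b0^2 + b1^2 + b2^2 + b3^2 + b4^2 + b5^2 + b6^2) := by
  have key : (a0^2 + a1^2 + a2^2 + a3^2 + a4^2 + a5^2 + a6^2) *
        (b0^2 + b1^2 + b2^2 + b3^2 + b4^2 + b5^2 + b6^2) =
      (a0*b0 + a1*b1 + a2*b2 + a3*b3 + a4*b4 + a5*b5 + a6*b6)^2 +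
      ((a0*b1 - a1*b0)^2 +
        (a0*b2 - a2*b0)^2 +
        (a0*b3 - a3*b0)^2 +
        (a0*b4 - a4*b0)^2 +
        (a0*b5 - a5*b0)^2 +
        (a0*b6 - a6*b0)^2 +
        (a1*b2 - a2*b1)^2 +
        (a1*b3 - a3*b1)^2 +
        (a1*b4 - a4*b1)^2 +
        (a1*b5 - a5*b1)^2 +
        (a1*b6 - a6*b1)^2 +
        (a2*b3 - a3*b2)^2 +
        (a2*b4 - a4*b2)^2 +
        (a2*b5 - a5*b2)^2 +
        (a2*b6 - a6*b2)^2 +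
        (a3*b4 - a4*b3)^2 +
        (a3*b5 - a5*b3)^2 +
        (a3*b6 - a6*b3)^2 +
        (a4*b5 - a5*b4)^2 +
        (a4*b6 - a6*b4)^2 +
        (a5*b6 - a6*b5)^2) := by ring
  have h0 : (0:ℝ) ≤ (a0*b1 - a1*b0)^2 +
        (a0*b2 - a2*b0)^2 +
        (a0*b3 - a3*b0)^2 +
        (a0*b4 - a4*b0)^2 +
        (a0*b5 - a5*b0)^2 +
        (a0*b6 - a6*b0)^2 +
        (a1*b2 - a2*b1)^2 +
        (a1*b3 - a3*b1)^2 +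
        (a1*b4 - a4*b1)^2 +
        (a1*b5 - a5*b1)^2 +
        (a1*b6 - a6*b1)^2 +
        (a2*b3 - a3*b2)^2 +
        (a2*b4 - a4*b2)^2 +
        (a2*b5 - a5*b2)^2 +
        (a2*b6 - a6*b2)^2 +
        (a3*b4 - a4*b3)^2 +
        (a3*b5 - a5*b3)^2 +
        (a3*b6 - a6*b3)^2 +
        (a4*b5 - a5*b4)^2 +
        (a4*b6 - a6*b4)^2 +
        (a5*b6 - a6*b5)^2 := by positivity
  linarith [key, h0]

set_option maxHeartbeats 4000000 in
/-- φ₀ is a calibration on ℝ⁷: φ₀(v₁,v₂,v₃) ≤ 1 on every orthonormal triple, with equality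
attained on the orthonormal triple (e₁, e₂, e₃) of standard basis vectors. -/
theorem phi0_is_calibration :
    (∀ v₁ v₂ v₃ : E7, Orthonormal ℝ ![v₁, v₂, v₃] → phi0 v₁ v₂ v₃ ≤ 1) ∧
    Orthonormal ℝ
      ![(EuclideanSpace.single 0 1 : E7), EuclideanSpace.single 1 1,
        EuclideanSpace.single 2 1] ∧
    phi0 (EuclideanSpace.single 0 1) (EuclideanSpace.single 1 1)
      (EuclideanSpace.single 2 1) = 1 := by
  refine ⟨?_, ?_, ?_⟩
  · intro v₁ v₂ v₃ h
    have key := orthonormal_iff_ite.mp h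
    have hsu : v₁ 0 * v₁ 0 + v₁ 1 * v₁ 1 + v₁ 2 * v₁ 2 + v₁ 3 * v₁ 3 + v₁ 4 * v₁ 4 + v₁ 5 * v₁ 5 + v₁ 6 * v₁ 6 = 1 := by
      have := key 0 0
      rw [PiLp.inner_apply] at this
      simpa [RCLike.inner_apply, Fin.sum_univ_seven, pow_two] using this
    have hsv : v₂ 0 * v₂ 0 + v₂ 1 * v₂ 1 + v₂ 2 * v₂ 2 + v₂ 3 * v₂ 3 + v₂ 4 * v₂ 4 + v₂ 5 * v₂ 5 + v₂ 6 * v₂ 6 = 1 := by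
      have := key 1 1
      rw [PiLp.inner_apply] at this
      simpa [RCLike.inner_apply, Fin.sum_univ_seven, pow_two] using this
    have hsw : v₃ 0 * v₃ 0 + v₃ 1 * v₃ 1 + v₃ 2 * v₃ 2 + v₃ 3 * v₃ 3 + v₃ 4 * v₃ 4 + v₃ 5 * v₃ 5 + v₃ 6 * v₃ 6 = 1 := by
      have := key 2 2
      rw [PiLp.inner_apply] at this
      simpa [RCLike.inner_apply, Fin.sum_univ_seven, pow_two] using this
    have hsuv : v₁ 0 * v₂ 0 + v₁ 1 * v₂ 1 + v₁ 2 * v₂ 2 + v₁ 3 * v₂ 3 + v₁ 4 * v₂ 4 + v₁ 5 * v₂ 5 + v₁ 6 * v₂ 6 = 0 := by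
      have := key 0 1
      simpa [PiLp.inner_apply, RCLike.inner_apply, Fin.sum_univ_seven, mul_comm] using this
    have hphi : phi0 v₁ v₂ v₃ = (v₁ 1*v₂ 2 - v₁ 2*v₂ 1 + v₁ 3*v₂ 4 - v₁ 4*v₂ 3 + v₁ 5*v₂ 6 - v₁ 6*v₂ 5) * v₃ 0 + (-(v₁ 0)*v₂ 2 + v₁ 2*v₂ 0 + v₁ 3*v₂ 5 - v₁ 4*v₂ 6 - v₁ 5*v₂ 3 + v₁ 6*v₂ 4) * v₃ 1 + (v₁ 0*v₂ 1 - v₁ 1*v₂ 0 - v₁ 3*v₂ 6 - v₁ 4*v₂ 5 + v₁ 5*v₂ 4 + v₁ 6*v₂ 3) * v₃ 2 + (-(v₁ 0)*v₂ 4 - v₁ 1*v₂ 5 + v₁ 2*v₂ 6 + v₁ 4*v₂ 0 + v₁ 5*v₂ 1 - v₁ 6*v₂ 2) * v₃ 3 + (v₁ 0*v₂ 3 + v₁ 1*v₂ 6 + v₁ 2*v₂ 5 - v₁ 3*v₂ 0 - v₁ 5*v₂ 2 - v₁ 6*v₂ 1) * v₃ 4 + (-(v₁ 0)*v₂ 6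 + v₁ 1*v₂ 3 - v₁ 2*v₂ 4 - v₁ 3*v₂ 1 + v₁ 4*v₂ 2 + v₁ 6*v₂ 0) * v₃ 5 + (v₁ 0*v₂ 5 - v₁ 1*v₂ 4 - v₁ 2*v₂ 3 + v₁ 3*v₂ 2 + v₁ 4*v₂ 1 - v₁ 5*v₂ 0) * v₃ 6 := by
      simp only [phi0, tri7, Matrix.det_fin_three]
      simp [Matrix.vecHead, Matrix.vecTail]
      ring
    have hB : (v₁ 1*v₂ 2 - v₁ 2*v₂ 1 + v₁ 3*v₂ 4 - v₁ 4*v₂ 3 + v₁ 5*v₂ 6 - v₁ 6*v₂ 5)^2 + (-(v₁ 0)*v₂ 2 + v₁ 2*v₂ 0 + v₁ 3*v₂ 5 - v₁ 4*v₂ 6 - v₁ 5*v₂ 3 + v₁ 6*v₂ 4)^2 + (v₁ 0*v₂ 1 - v₁ 1*v₂ 0 - v₁ 3*v₂ 6 - v₁ 4*v₂ 5 + v₁ 5*v₂ 4 + v₁ 6*v₂ 3)^2 + (-(v₁ 0)*v₂ 4 - v₁ 1*v₂ 5 + v₁ 2*v₂ 6 + v₁ 4*v₂ 0 + v₁ 5*v₂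 1 - v₁ 6*v₂ 2)^2 + (v₁ 0*v₂ 3 + v₁ 1*v₂ 6 + v₁ 2*v₂ 5 - v₁ 3*v₂ 0 - v₁ 5*v₂ 2 - v₁ 6*v₂ 1)^2 + (-(v₁ 0)*v₂ 6 + v₁ 1*v₂ 3 - v₁ 2*v₂ 4 - v₁ 3*v₂ 1 + v₁ 4*v₂ 2 + v₁ 6*v₂ 0)^2 + (v₁ 0*v₂ 5 - v₁ 1*v₂ 4 - v₁ 2*v₂ 3 + v₁ 3*v₂ 2 + v₁ 4*v₂ 1 - v₁ 5*v₂ 0)^2 = 1 := by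
      linear_combination (v₂ 0 * v₂ 0 + v₂ 1 * v₂ 1 + v₂ 2 * v₂ 2 + v₂ 3 * v₂ 3 + v₂ 4 * v₂ 4 + v₂ 5 * v₂ 5 + v₂ 6 * v₂ 6) * hsu + hsv + (-(v₁ 0 * v₂ 0 + v₁ 1 * v₂ 1 + v₁ 2 * v₂ 2 + v₁ 3 * v₂ 3 + v₁ 4 * v₂ 4 + v₁ 5 * v₂ 5 + v₁ 6 * v₂ 6)) * hsuv
    have hcs := cs7 (v₁ 1*v₂ 2 - v₁ 2*v₂ 1 + v₁ 3*v₂ 4 - v₁ 4*v₂ 3 + v₁ 5*v₂ 6 - v₁ 6*v₂ 5) (-(v₁ 0)*v₂ 2 + v₁ 2*v₂ 0 + v₁ 3*v₂ 5 - v₁ 4*v₂ 6 - v₁ 5*v₂ 3 + v₁ 6*v₂ 4) (v₁ 0*v₂ 1 - v₁ 1*v₂ 0 - v₁ 3*v₂ 6 - v₁ 4*v₂ 5 + v₁ 5*v₂ 4 + v₁ 6*v₂ 3) (-(v₁ 0)*v₂ 4 - v₁ 1*v₂ 5 + v₁ 2*v₂ 6 + v₁ 4*v₂ 0 + v₁ 5*v₂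 1 - v₁ 6*v₂ 2) (v₁ 0*v₂ 3 + v₁ 1*v₂ 6 + v₁ 2*v₂ 5 - v₁ 3*v₂ 0 - v₁ 5*v₂ 2 - v₁ 6*v₂ 1) (-(v₁ 0)*v₂ 6 + v₁ 1*v₂ 3 - v₁ 2*v₂ 4 - v₁ 3*v₂ 1 + v₁ 4*v₂ 2 + v₁ 6*v₂ 0) (v₁ 0*v₂ 5 - v₁ 1*v₂ 4 - v₁ 2*v₂ 3 + v₁ 3*v₂ 2 + v₁ 4*v₂ 1 - v₁ 5*v₂ 0) (v₃ 0) (v₃ 1) (v₃ 2) (v₃ 3) (v₃ 4) (v₃ 5) (v₃ 6)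
    have hp2 : (phi0 v₁ v₂ v₃)^2 ≤ 1 := by
      rw [hphi]
      refine hcs.trans_eq ?_
      rw [hB]
      linear_combination hsw
    exact (abs_le.mp ((sq_le_one_iff_abs_le_one (a := phi0 v₁ v₂ v₃)).mp hp2)).2
  · rw [orthonormal_iff_ite]
    intro i j
    fin_cases i <;> fin_cases j <;>
      simp [EuclideanSpace.inner_single_left, EuclideanSpace.single_apply]
  · simp [phi0, tri7, Matrix.det_fin_three, EuclideanSpace.single_apply]
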